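/- In the setting of an algebra of RS type: let R be a Hecke symmetry on ℂ^N with parameter q ∈ ℂ \ {0,1,−1}, m, n nonnegative integers, α = q^{n−m}·(q^{m−n} − q^{n−m})/(q − q⁻¹), 𝒜 an associative unital ℂ-algebra, and C a fixed N×N complex matrix satisfying (i) Tr_{R(2)} R₁₂ = I_N, (ii) Tr_R I_N = α, (iii) Tr_{R(2)}(R₁₂·A₁·R₁₂⁻¹) = (Tr_R A)·I_N = Tr_{R(2)}(R₁₂⁻¹·A₁·R₁₂) for every N×N matrix A over 𝒜. Set f(x) = −(q−q⁻¹)x/(x−1), ℛ(x) = R + f(x)·I, and let c ∈ ℂ \ {0}. Suppose L(u) (u ∈ ℂ \ {0}) satisfies ℛ(u/v)·L₁(u)·ℛ(vc/u)·L₁(v) = L₁(v)·ℛ(uc/v)·L₁(u)·ℛ(v/u) whenever all four arguments differ from 1. Assume additionally the nondegeneracy condition: for all admissible u ≠ v, if λ·L(u)L(v) + μ·L(v)L(u) = 0 with λ, μ ∈ ℂ then λ = μ = 0. Then (Tr_R L(u))·L(v) = L(v)·(Tr_R L(u)) holds for all admissible u, v if and only if c = q^{2(m−n)}. -/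

import Mathlib

open Matrix

/-- `op12 X = X ⊗ I_N` acting on `V ⊗ V ⊗ V`. -/
def op12 {N : ℕ} (X : Matrix (Fin N × Fin N) (Fin N × Fin N) ℂ) :
    Matrix (Fin N × Fin N × Fin N) (Fin N × Fin N × Fin N) ℂ :=
  Matrix.of fun a b => X (a.1, a.2.1) (b.1, b.2.1) * (if a.2.2 = b.2.2 then 1 else 0)

/-- `op23 X = I_N ⊗ X` acting on `V ⊗ V ⊗ V`. -/
def op23 {N : ℕ} (X : Matrix (Fin N × Fin N) (Fin N × Fin N) ℂ) :
    Matrix (Fin N × Fin N × Fin N) (Fin N × Fin N × Fin N) ℂ :=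
  Matrix.of fun a b => (if a.1 = b.1 then 1 else 0) * X (a.2.1, a.2.2) (b.2.1, b.2.2)

/-- For an `N×N` matrix `X` with entries in `A`, `leg1 X = X ⊗ I_N`. -/
def leg1 {N : ℕ} {A : Type*} [Semiring A] (X : Matrix (Fin N) (Fin N) A) :
    Matrix (Fin N × Fin N) (Fin N × Fin N) A :=
  Matrix.of fun a b => X a.1 b.1 * (if a.2 = b.2 then 1 else 0)

/-- Embedding of a complex matrix into matrices over a `ℂ`-algebra `A`. -/
def emb {n : Type*} {A : Type*} [Semiring A] [Algebra ℂ A] (R : Matrix n n ℂ) :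
    Matrix n n A :=
  R.map (algebraMap ℂ A)

/-- The `R`-trace: `Tr_R X = Σ_{i,j} C^i_j X^j_i`. -/
def trR {N : ℕ} {A : Type*} [Ring A] [Algebra ℂ A]
    (C : Matrix (Fin N) (Fin N) ℂ) (X : Matrix (Fin N) (Fin N) A) : A :=
  ∑ i, ∑ j, C i j • X j i

/-- The partial `R`-trace over the second factor. -/
def trR2 {N : ℕ} {A : Type*} [Ring A] [Algebra ℂ A]
    (C : Matrix (Fin N) (Fin N) ℂ) (M : Matrix (Fin N × Fin N) (Fin N × Fin N) A) :
    Matrix (Fin N) (Fin N) A :=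
  Matrix.of fun r s => ∑ a, ∑ b, C a b • M (r, b) (s, a)


/-- The shift function of the Baxterized trigonometric `R`-matrix:
`f(x) = −(q−q⁻¹)x/(x−1)`. -/
noncomputable def fshift (q x : ℂ) : ℂ := -(q - q⁻¹) * x / (x - 1)

/-- `α = q^{n−m}·(m−n)_q`, the `R`-trace of the identity for bi-rank `(m|n)`. -/
noncomputable def alphaHecke (q : ℂ) (m n : ℕ) : ℂ :=
  q ^ ((n : ℤ) - m) * (q ^ ((m : ℤ) - n) - q ^ ((n : ℤ) - m)) / (q - q⁻¹)

/-! Taking the partial trace `Tr_{R(2)}` of the RS relation, and trading `R` for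
`R⁻¹ = R - (q - q⁻¹)` where (iii) needs it, gives
`Tr_R L(u) · L(v) + γ · L(u)L(v) = L(v) · Tr_R L(u) + β · L(v)L(u)`,
where `γ`, `β` are the values of `g(a, b) = q - q⁻¹ + a + b + abα` at `(f(u/v), f(vc/u))`
and at `(f(uc/v), f(v/u))`. Now `g(f(x), f(y)) = (q - q⁻¹)(1 - q^{2(n-m)}xy) / ((x - 1)(y - 1))`
and both pairs have product `c`, so `γ` and `β` vanish exactly at the critical charge;
conversely, nondegeneracy turns the centrality of `Tr_R L(u)` into `γ = 0`. -/

section PartialTrace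

variable {N : ℕ} {A : Type*} [Ring A] [Algebra ℂ A] (C : Matrix (Fin N) (Fin N) ℂ)

theorem trR2_add (M M' : Matrix (Fin N × Fin N) (Fin N × Fin N) A) :
    trR2 C (M + M') = trR2 C M + trR2 C M' := by
  ext r s
  simp [trR2, smul_add, Finset.sum_add_distrib]

theorem trR2_smul (t : ℂ) (M : Matrix (Fin N × Fin N) (Fin N × Fin N) A) :
    trR2 C (t • M) = t • trR2 C M := by
  ext r s
  simp [trR2, Finset.smul_sum, smul_comm t]

theorem trR2_leg1_mul (X : Matrix (Fin N) (Fin N) A)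
    (M : Matrix (Fin N × Fin N) (Fin N × Fin N) A) :
    trR2 C (leg1 X * M) = X * trR2 C M := by
  ext r s
  simp only [trR2, leg1, Matrix.mul_apply, Matrix.of_apply, Fintype.sum_prod_type, ite_mul,
    mul_ite, mul_one, mul_zero, zero_mul, Finset.sum_ite_eq, Finset.mem_univ, if_true,
    Finset.smul_sum, Finset.mul_sum, mul_smul_comm]
  exact (Finset.sum_comm.trans (Finset.sum_congr rfl fun _ _ => Finset.sum_comm)).symm

theorem trR2_mul_leg1 (X : Matrix (Fin N) (Fin N) A)
    (M : Matrix (Fin N × Fin N) (Fin N × Fin N) A) :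
    trR2 C (M * leg1 X) = trR2 C M * X := by
  ext r s
  simp only [trR2, leg1, Matrix.mul_apply, Matrix.of_apply, Fintype.sum_prod_type,
    mul_ite, mul_one, mul_zero, Finset.sum_ite_eq', Finset.mem_univ, if_true,
    Finset.smul_sum, Finset.sum_mul, smul_mul_assoc]
  exact (Finset.sum_comm.trans (Finset.sum_congr rfl fun _ _ => Finset.sum_comm)).symm

theorem trR2_leg1 (X : Matrix (Fin N) (Fin N) A) :
    trR2 C (leg1 X) = trR C (1 : Matrix (Fin N) (Fin N) ℂ) • X := by
  ext r s
  simp [trR2, trR, leg1, Matrix.one_apply, Finset.sum_ite_eq', Finset.sum_smul]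

theorem trR2_emb (M : Matrix (Fin N × Fin N) (Fin N × Fin N) ℂ) :
    trR2 C (emb M : Matrix (Fin N × Fin N) (Fin N × Fin N) A) = emb (trR2 C M) := by
  ext r s
  simp [trR2, emb, Algebra.smul_def]

end PartialTrace

theorem emb_one {n A : Type*} [Fintype n] [DecidableEq n] [Semiring A] [Algebra ℂ A] :
    (emb (1 : Matrix n n ℂ) : Matrix n n A) = 1 :=
  Matrix.map_one _ (map_zero _) (map_one _)

theorem emb_add_smul_one {n A : Type*} [Fintype n] [DecidableEq n] [Semiring A] [Algebra ℂ A]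
    (M : Matrix n n ℂ) (a : ℂ) :
    (emb (M + a • 1) : Matrix n n A) = emb M + a • 1 := by
  ext i j
  by_cases h : i = j <;> simp [emb, h, Algebra.algebraMap_eq_smul_one, add_smul]

theorem Matrix.inv_eq_sub_of_hecke {n K : Type*} [Fintype n] [DecidableEq n] [Field K]
    {q : K} (hq : q ≠ 0) {R : Matrix n n K} (h : (R - q • 1) * (R + q⁻¹ • 1) = 0) :
    R⁻¹ = R - (q - q⁻¹) • 1 := by
  refine Matrix.inv_eq_right_inv ?_
  rw [← sub_eq_zero, ← h]
  simp only [sub_mul, mul_add, mul_sub, Matrix.smul_mul, Matrix.mul_smul, smul_smul, mul_one,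
    one_mul]
  match_scalars <;> simp [hq, neg_add_eq_sub]

/-- The coefficient of `X` in `Tr_{R(2)} ((R + a) X₁ (R + b))`, where `α = Tr_R I`. -/
noncomputable def traceCoeff (q α a b : ℂ) : ℂ := q - q⁻¹ + a + b + a * b * α

section TracedRelation

variable {N : ℕ} {A : Type*} [Ring A] [Algebra ℂ A] {C : Matrix (Fin N) (Fin N) ℂ} {q : ℂ}
  {R : Matrix (Fin N × Fin N) (Fin N × Fin N) ℂ}

theorem trR2_emb_add_smul_mul_leg1_mul (hR : R⁻¹ = R - (q - q⁻¹) • 1) (hi : trR2 C R = 1)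
    (hiii : ∀ X : Matrix (Fin N) (Fin N) A,
      trR2 C (emb R * leg1 X * emb R⁻¹) = trR C X • (1 : Matrix (Fin N) (Fin N) A))
    (a b : ℂ) (X : Matrix (Fin N) (Fin N) A) :
    trR2 C (emb (R + a • 1) * leg1 X * emb (R + b • 1)) =
      trR C X • 1 + traceCoeff q (trR C 1) a b • X := by
  set S : Matrix (Fin N × Fin N) (Fin N × Fin N) A := emb R
  have hS : trR2 C S = 1 := by rw [trR2_emb, hi, emb_one]
  -- trading the right-hand `S` for `S⁻¹ = S - (q - q⁻¹)` makes (iii) applicable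
  have expand : (S + a • 1) * leg1 X * (S + b • 1) =
      S * leg1 X * emb R⁻¹ + (q - q⁻¹ + b) • (S * leg1 X) + a • (leg1 X * S) +
        (a * b) • leg1 X := by
    rw [hR, sub_eq_add_neg, ← neg_smul, emb_add_smul_one]
    simp only [add_mul, mul_add, Matrix.smul_mul, Matrix.mul_smul, mul_one, one_mul, smul_smul]
    module
  rw [emb_add_smul_one, emb_add_smul_one, expand]
  simp only [trR2_add, trR2_smul, hiii, trR2_mul_leg1, trR2_leg1_mul, trR2_leg1, hS, one_mul,
    mul_one, traceCoeff, smul_smul, add_assoc, ← add_smul]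
  congr 2
  ring

theorem trR2_RS_relation (hR : R⁻¹ = R - (q - q⁻¹) • 1) (hi : trR2 C R = 1)
    (hiii : ∀ X : Matrix (Fin N) (Fin N) A,
      trR2 C (emb R * leg1 X * emb R⁻¹) = trR C X • (1 : Matrix (Fin N) (Fin N) A))
    {a b a' b' : ℂ} {X Y : Matrix (Fin N) (Fin N) A}
    (h : emb (R + a • 1) * leg1 X * emb (R + b • 1) * leg1 Y =
      leg1 Y * emb (R + a' • 1) * leg1 X * emb (R + b' • 1)) :
    trR C X • Y + traceCoeff q (trR C 1) a b • (X * Y) =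
      Y * (trR C X • 1) + traceCoeff q (trR C 1) a' b' • (Y * X) := by
  have h' := congrArg (trR2 C) h
  rwa [trR2_mul_leg1, Matrix.mul_assoc (leg1 Y), Matrix.mul_assoc (leg1 Y), trR2_leg1_mul,
    trR2_emb_add_smul_mul_leg1_mul hR hi hiii, trR2_emb_add_smul_mul_leg1_mul hR hi hiii,
    add_mul, mul_add, Matrix.smul_mul, Matrix.smul_mul, one_mul,
    Matrix.mul_smul Y (traceCoeff q _ a' b') X] at h'

end TracedRelation

theorem sub_inv_ne_zero {K : Type*} [Field K] {q : K} (hq0 : q ≠ 0) (hq1 : q ≠ 1)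
    (hqm1 : q ≠ -1) : q - q⁻¹ ≠ 0 := by
  rw [sub_ne_zero, ne_eq, ← mul_eq_one_iff_eq_inv₀ hq0, mul_self_eq_one_iff, not_or]
  exact ⟨hq1, hqm1⟩

theorem traceCoeff_fshift (q α : ℂ) {x y : ℂ} (hx : x ≠ 1) (hy : y ≠ 1) :
    traceCoeff q α (fshift q x) (fshift q y) =
      (q - q⁻¹) * (1 - (1 - (q - q⁻¹) * α) * (x * y)) / ((x - 1) * (y - 1)) := by
  have hx' : x - 1 ≠ 0 := sub_ne_zero.mpr hx
  have hy' : y - 1 ≠ 0 := sub_ne_zero.mpr hy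
  rw [traceCoeff, fshift, fshift]
  generalize q - q⁻¹ = ω
  field_simp
  ring

theorem one_sub_mul_alphaHecke {q : ℂ} (hq0 : q ≠ 0) (hq : q - q⁻¹ ≠ 0) (m n : ℕ) :
    1 - (q - q⁻¹) * alphaHecke q m n = (q ^ (2 * ((m : ℤ) - n)))⁻¹ := by
  rw [alphaHecke, mul_div_cancel₀ _ hq, mul_sub, ← zpow_add₀ hq0, ← zpow_add₀ hq0,
    show (n : ℤ) - m + (m - n) = 0 by ring,
    show (n : ℤ) - m + (n - m) = -(2 * ((m : ℤ) - n)) by ring, zpow_zero, _root_.zpow_neg,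
    sub_sub_cancel]

theorem traceCoeff_fshift_eq_zero_iff {q : ℂ} (hq0 : q ≠ 0) (hq : q - q⁻¹ ≠ 0) (m n : ℕ)
    {x y : ℂ} (hx : x ≠ 1) (hy : y ≠ 1) :
    traceCoeff q (alphaHecke q m n) (fshift q x) (fshift q y) = 0 ↔
      x * y = q ^ (2 * ((m : ℤ) - n)) := by
  have hcrit : q ^ (2 * ((m : ℤ) - n)) ≠ 0 := zpow_ne_zero _ hq0
  rw [traceCoeff_fshift q _ hx hy, one_sub_mul_alphaHecke hq0 hq, div_eq_zero_iff,
    mul_eq_zero, or_iff_right hq, or_iff_left (mul_ne_zero (sub_ne_zero.mpr hx)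
    (sub_ne_zero.mpr hy)), sub_eq_zero, eq_comm, inv_mul_eq_one₀ hcrit, eq_comm]

theorem exists_ne_zero_ne_one_ne_mul_ne_one (c : ℂ) :
    ∃ x : ℂ, x ≠ 0 ∧ x ≠ 1 ∧ x ≠ c ∧ x * c ≠ 1 := by
  obtain ⟨x, hx⟩ := Infinite.exists_notMem_finset ({0, 1, c, c⁻¹} : Finset ℂ)
  simp only [Finset.mem_insert, Finset.mem_singleton, not_or] at hx
  exact ⟨x, hx.1, hx.2.1, hx.2.2.1, fun h => hx.2.2.2 (eq_inv_of_mul_eq_one_left h)⟩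

theorem first_power_sum_central_iff_critical_charge_general
    {N : ℕ} {A : Type*} [Ring A] [Algebra ℂ A]
    (q : ℂ) (hq0 : q ≠ 0) (hq1 : q ≠ 1) (hqm1 : q ≠ -1)
    (m n : ℕ)
    (R : Matrix (Fin N × Fin N) (Fin N × Fin N) ℂ)
    (hHecke : (R - q • (1 : Matrix (Fin N × Fin N) (Fin N × Fin N) ℂ)) *
      (R + q⁻¹ • (1 : Matrix (Fin N × Fin N) (Fin N × Fin N) ℂ)) = 0)
    (C : Matrix (Fin N) (Fin N) ℂ)
    (hi : trR2 C R = (1 : Matrix (Fin N) (Fin N) ℂ))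
    (hii : trR C (1 : Matrix (Fin N) (Fin N) ℂ) = alphaHecke q m n)
    (hiii1 : ∀ X : Matrix (Fin N) (Fin N) A,
      trR2 C (emb R * leg1 X * emb R⁻¹) = trR C X • (1 : Matrix (Fin N) (Fin N) A))
    (c : ℂ)
    (L : ℂ → Matrix (Fin N) (Fin N) A)
    (hRS : ∀ u v : ℂ, u ≠ 0 → v ≠ 0 →
      u / v ≠ 1 → v * c / u ≠ 1 → u * c / v ≠ 1 → v / u ≠ 1 →
      emb (R + fshift q (u / v) • (1 : Matrix (Fin N × Fin N) (Fin N × Fin N) ℂ)) *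
          leg1 (L u) *
          emb (R + fshift q (v * c / u) • (1 : Matrix (Fin N × Fin N) (Fin N × Fin N) ℂ)) *
          leg1 (L v) =
        leg1 (L v) *
          emb (R + fshift q (u * c / v) • (1 : Matrix (Fin N × Fin N) (Fin N × Fin N) ℂ)) *
          leg1 (L u) *
          emb (R + fshift q (v / u) • (1 : Matrix (Fin N × Fin N) (Fin N × Fin N) ℂ)))
    (hnondeg : ∀ u v : ℂ, u ≠ 0 → v ≠ 0 →
      u / v ≠ 1 → v * c / u ≠ 1 → u * c / v ≠ 1 → v / u ≠ 1 → u ≠ v →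
      ∀ lam mu : ℂ, lam • (L u * L v) + mu • (L v * L u) = 0 → lam = 0 ∧ mu = 0) :
    (∀ u v : ℂ, u ≠ 0 → v ≠ 0 →
        u / v ≠ 1 → v * c / u ≠ 1 → u * c / v ≠ 1 → v / u ≠ 1 →
        trR C (L u) • L v = L v * (trR C (L u) • (1 : Matrix (Fin N) (Fin N) A)))
      ↔ c = q ^ (2 * ((m : ℤ) - n)) := by
  have hq := sub_inv_ne_zero hq0 hq1 hqm1
  have traced u v hu hv h1 h2 h3 h4 :=
    trR2_RS_relation (Matrix.inv_eq_sub_of_hecke hq0 hHecke) hi hiii1 (hRS u v hu hv h1 h2 h3 h4)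
  have coeff_eq_zero_iff {x y : ℂ} (hx : x ≠ 1) (hy : y ≠ 1) (hxy : x * y = c) :
      traceCoeff q (trR C 1) (fshift q x) (fshift q y) = 0 ↔ c = q ^ (2 * ((m : ℤ) - n)) := by
    rw [hii, traceCoeff_fshift_eq_zero_iff hq0 hq m n hx hy, hxy]
  constructor
  · intro hcomm
    obtain ⟨x, hx0, hx1, hxc, hxc'⟩ := exists_ne_zero_ne_one_ne_mul_ne_one c
    have h1 : x / 1 ≠ 1 := by rwa [div_one]
    have h2 : 1 * c / x ≠ 1 := by rwa [one_mul, ne_eq, div_eq_one_iff_eq hx0, eq_comm]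
    have h3 : x * c / 1 ≠ 1 := by rwa [div_one]
    have h4 : 1 / x ≠ 1 := by rwa [one_div, ne_eq, inv_eq_one]
    have hsum := traced x 1 hx0 one_ne_zero h1 h2 h3 h4
    rw [hcomm x 1 hx0 one_ne_zero h1 h2 h3 h4, add_right_inj, ← sub_eq_zero, sub_eq_add_neg,
      ← neg_smul] at hsum
    have hcoeff := (hnondeg x 1 hx0 one_ne_zero h1 h2 h3 h4 hx1 _ _ hsum).1
    exact (coeff_eq_zero_iff h1 h2 (by field_simp)).1 hcoeff
  · intro hcrit u v hu hv h1 h2 h3 h4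
    have hsum := traced u v hu hv h1 h2 h3 h4
    rwa [(coeff_eq_zero_iff h1 h2 (by field_simp)).2 hcrit,
      (coeff_eq_zero_iff h3 h4 (by field_simp)).2 hcrit, zero_smul, zero_smul, add_zero,
      add_zero] at hsum

/-- in an algebra of RS type with charge `c` (satisfying a nondegeneracy
condition), the first quantum power sum `Tr_R L(u)` commutes with all generators `L(v)`
iff the charge is critical: `c = q^{2(m−n)}`. -/
theorem first_power_sum_central_iff_critical_charge
    {N : ℕ} {A : Type*} [Ring A] [Algebra ℂ A]
    (q : ℂ) (hq0 : q ≠ 0) (hq1 : q ≠ 1) (hqm1 : q ≠ -1)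
    (m n : ℕ)
    (R : Matrix (Fin N × Fin N) (Fin N × Fin N) ℂ)
    (hRinv : IsUnit R)
    (hbraid : op12 R * op23 R * op12 R = op23 R * op12 R * op23 R)
    (hHecke : (R - q • (1 : Matrix (Fin N × Fin N) (Fin N × Fin N) ℂ)) *
      (R + q⁻¹ • (1 : Matrix (Fin N × Fin N) (Fin N × Fin N) ℂ)) = 0)
    (C : Matrix (Fin N) (Fin N) ℂ)
    (hi : trR2 C R = (1 : Matrix (Fin N) (Fin N) ℂ))
    (hii : trR C (1 : Matrix (Fin N) (Fin N) ℂ) = alphaHecke q m n)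
    (hiii1 : ∀ X : Matrix (Fin N) (Fin N) A,
      trR2 C (emb R * leg1 X * emb R⁻¹) = trR C X • (1 : Matrix (Fin N) (Fin N) A))
    (hiii2 : ∀ X : Matrix (Fin N) (Fin N) A,
      trR2 C (emb R⁻¹ * leg1 X * emb R) = trR C X • (1 : Matrix (Fin N) (Fin N) A))
    (c : ℂ) (hc : c ≠ 0)
    (L : ℂ → Matrix (Fin N) (Fin N) A)
    (hRS : ∀ u v : ℂ, u ≠ 0 → v ≠ 0 →
      u / v ≠ 1 → v * c / u ≠ 1 → u * c / v ≠ 1 → v / u ≠ 1 →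
      emb (R + fshift q (u / v) • (1 : Matrix (Fin N × Fin N) (Fin N × Fin N) ℂ)) *
          leg1 (L u) *
          emb (R + fshift q (v * c / u) • (1 : Matrix (Fin N × Fin N) (Fin N × Fin N) ℂ)) *
          leg1 (L v) =
        leg1 (L v) *
          emb (R + fshift q (u * c / v) • (1 : Matrix (Fin N × Fin N) (Fin N × Fin N) ℂ)) *
          leg1 (L u) *
          emb (R + fshift q (v / u) • (1 : Matrix (Fin N × Fin N) (Fin N × Fin N) ℂ)))
    (hnondeg : ∀ u v : ℂ, u ≠ 0 → v ≠ 0 →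
      u / v ≠ 1 → v * c / u ≠ 1 → u * c / v ≠ 1 → v / u ≠ 1 → u ≠ v →
      ∀ lam mu : ℂ, lam • (L u * L v) + mu • (L v * L u) = 0 → lam = 0 ∧ mu = 0) :
    (∀ u v : ℂ, u ≠ 0 → v ≠ 0 →
        u / v ≠ 1 → v * c / u ≠ 1 → u * c / v ≠ 1 → v / u ≠ 1 →
        trR C (L u) • L v = L v * (trR C (L u) • (1 : Matrix (Fin N) (Fin N) A)))
      ↔ c = q ^ (2 * ((m : ℤ) - n)) :=
  first_power_sum_central_iff_critical_charge_general q hq0 hq1 hqm1 m n R hHecke C hi hii hiii1 c L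
    hRS hnondeg
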